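/- arXiv:1701.00109 — 6 statements merged into one kernel-verified Lean document; each statement's English description precedes it below -/
import Mathlib

section
/- For the curve R(t) = sin t + i·ξ(t), the speed satisfies |R'(t)| = 1/√(1 + sin²t), the unit tangent satisfies R'(t)/|R'(t)| = cos t·√(1 + sin²t) + i·sin²t, and the signed curvature equals 2·sin t. -/
open Real Complex

noncomputable def xi (t : ℝ) : ℝ :=
  ∫ τ in (0:ℝ)..t, Real.sin τ ^ 2 / Real.sqrt (1 + Real.sin τ ^ 2)

noncomputable def R (t : ℝ) : ℂ := (Real.sin t : ℂ) + Complex.I * (xi t : ℂ)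

/-- Planar cross product on ℂ: (u₁+iv₁) × (u₂+iv₂) = u₁v₂ − v₁u₂. -/
def cross (u v : ℂ) : ℝ := u.re * v.im - u.im * v.re

/-!
By the fundamental theorem of calculus, `R' = cos t + i sin² t / q` with `q = √(1 + sin² t)`,
and differentiating once more, `R'' = -sin t + i sin t cos t (2 + sin² t) / q³`.
With `cos² t = 1 - sin² t` and `q² = 1 + sin² t` one gets
`|R'|² = (cos² t q² + sin⁴ t) / q² = 1 / q²` and
`R' × R'' = sin t (cos² t (2 + sin² t) + sin² t q²) / q³ = 2 sin t / q³`.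
-/

lemma hasDerivAt_ofReal_add_I_mul {u v : ℝ → ℝ} {u' v' t : ℝ} (hu : HasDerivAt u u' t)
    (hv : HasDerivAt v v' t) :
    HasDerivAt (fun τ => (u τ : ℂ) + I * v τ) ((u' : ℂ) + I * v') t :=
  hu.ofReal_comp.add (hv.ofReal_comp.const_mul I)

lemma cross_ofReal_add_I_mul (a b c d : ℝ) :
    cross (a + I * b) (c + I * d) = a * d - b * c := by
  simp [cross]

lemma norm_ofReal_add_I_mul (a b : ℝ) : ‖(a : ℂ) + I * b‖ = √(a ^ 2 + b ^ 2) := by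
  rw [mul_comm, norm_add_mul_I]

lemma sqrt_one_add_sq_pos (x : ℝ) : 0 < √(1 + x ^ 2) := by positivity

lemma sq_sqrt_one_add_sq (x : ℝ) : √(1 + x ^ 2) ^ 2 = 1 + x ^ 2 :=
  sq_sqrt (by positivity)

lemma hasDerivAt_sq_div_sqrt_one_add_sq (x : ℝ) :
    HasDerivAt (fun y => y ^ 2 / √(1 + y ^ 2)) (x * (2 + x ^ 2) / √(1 + x ^ 2) ^ 3) x := by
  have hq := sqrt_one_add_sq_pos x
  have hnum : HasDerivAt (fun y => y ^ 2) (2 * x) x := by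
    simpa using hasDerivAt_pow 2 x
  have hden : HasDerivAt (fun y => √(1 + y ^ 2)) (x / √(1 + x ^ 2)) x := by
    refine ((hnum.const_add 1).sqrt (by positivity)).congr_deriv ?_
    field_simp
  refine (hnum.fun_div hden hq.ne').congr_deriv ?_
  field_simp
  rw [sq_sqrt_one_add_sq]
  ring

lemma hasDerivAt_xi (t : ℝ) : HasDerivAt xi (Real.sin t ^ 2 / √(1 + Real.sin t ^ 2)) t := by
  have hcont : Continuous fun τ => Real.sin τ ^ 2 / √(1 + Real.sin τ ^ 2) :=
    (Real.continuous_sin.pow 2).div (by fun_prop) fun τ => (sqrt_one_add_sq_pos _).ne'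
  exact (hcont.integral_hasStrictDerivAt 0 t).hasDerivAt

lemma deriv_R : deriv R = fun t =>
    (Real.cos t : ℂ) + I * ((Real.sin t ^ 2 / √(1 + Real.sin t ^ 2) : ℝ) : ℂ) :=
  funext fun t => (hasDerivAt_ofReal_add_I_mul (Real.hasDerivAt_sin t) (hasDerivAt_xi t)).deriv

lemma deriv_deriv_R (t : ℝ) :
    deriv (deriv R) t = ((-Real.sin t : ℝ) : ℂ) + I *
      ((Real.sin t * (2 + Real.sin t ^ 2) / √(1 + Real.sin t ^ 2) ^ 3 * Real.cos t : ℝ) : ℂ) := by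
  rw [deriv_R]
  exact (hasDerivAt_ofReal_add_I_mul (Real.hasDerivAt_cos t)
    ((hasDerivAt_sq_div_sqrt_one_add_sq (Real.sin t)).comp t (Real.hasDerivAt_sin t))).deriv

lemma norm_deriv_R (t : ℝ) : ‖deriv R t‖ = 1 / √(1 + Real.sin t ^ 2) := by
  have hq := sqrt_one_add_sq_pos (Real.sin t)
  rw [deriv_R, norm_ofReal_add_I_mul, sqrt_eq_iff_eq_sq (by positivity) (by positivity)]
  field_simp
  linear_combination Real.cos t ^ 2 * sq_sqrt_one_add_sq (Real.sin t)
    + (1 + Real.sin t ^ 2) * Real.sin_sq_add_cos_sq t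

lemma cross_deriv_R_deriv_deriv_R (t : ℝ) :
    cross (deriv R t) (deriv (deriv R) t) = 2 * Real.sin t / √(1 + Real.sin t ^ 2) ^ 3 := by
  have hq := sqrt_one_add_sq_pos (Real.sin t)
  rw [deriv_deriv_R, deriv_R, cross_ofReal_add_I_mul]
  field_simp
  linear_combination Real.sin t ^ 3 * sq_sqrt_one_add_sq (Real.sin t)
    + Real.sin t * (2 + Real.sin t ^ 2) * Real.sin_sq_add_cos_sq t

theorem R_speed_tangent_curvature (t : ℝ) :
    ‖deriv R t‖ = 1 / Real.sqrt (1 + Real.sin t ^ 2) ∧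
    deriv R t / (‖deriv R t‖ : ℂ)
      = ((Real.cos t * Real.sqrt (1 + Real.sin t ^ 2) : ℝ) : ℂ)
        + Complex.I * ((Real.sin t ^ 2 : ℝ) : ℂ) ∧
    cross (deriv R t) (deriv (deriv R) t) / ‖deriv R t‖ ^ 3
      = 2 * Real.sin t := by
  have hq := sqrt_one_add_sq_pos (Real.sin t)
  refine ⟨norm_deriv_R t, ?_, ?_⟩
  · have hqC : ((√(1 + Real.sin t ^ 2) : ℝ) : ℂ) ≠ 0 := Complex.ofReal_ne_zero.2 hq.ne'
    rw [norm_deriv_R, deriv_R]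
    push_cast
    field_simp
  · rw [norm_deriv_R, cross_deriv_R_deriv_deriv_R]
    field_simp
end

section
/- For any s-curve with chord angles (α, β), one has |α| < π, |β| < π, and |α − β| ≤ π. -/
open Real Complex Set

/-- An s-curve: a C¹ plane curve `f : [a,b] → ℂ` with nonvanishing derivative which,
as measured by a continuous turning-angle function `θ` (so that
`f'(t) = |f'(t)| · exp(i θ(t))`), first turns monotonically at most `π` in one
direction (up to time `c`) and then monotonically at most `π` in the opposite
direction. -/
structure SCurve where
  a : ℝ
  b : ℝ
  hab : a < b
  f : ℝ → ℂ
  θ : ℝ → ℝ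
  c : ℝ
  hc : c ∈ Icc a b
  hf : ContDiffOn ℝ 1 f (Icc a b)
  hne : ∀ t ∈ Icc a b, deriv f t ≠ 0
  hθcont : ContinuousOn θ (Icc a b)
  hθ : ∀ t ∈ Icc a b,
    deriv f t = (‖deriv f t‖ : ℂ) * Complex.exp (Complex.I * (θ t : ℂ))
  hmono : (MonotoneOn θ (Icc a c) ∧ AntitoneOn θ (Icc c b)) ∨
          (AntitoneOn θ (Icc a c) ∧ MonotoneOn θ (Icc c b))
  hturn₁ : |θ c - θ a| ≤ π
  hturn₂ : |θ b - θ c| ≤ π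

/-- Initial chord angle of an s-curve. -/
noncomputable def SCurve.alpha (s : SCurve) : ℝ :=
  Complex.arg (deriv s.f s.a / (s.f s.b - s.f s.a))

/-- Terminal chord angle of an s-curve. -/
noncomputable def SCurve.beta (s : SCurve) : ℝ :=
  Complex.arg (deriv s.f s.b / (s.f s.b - s.f s.a))

/-!
Rotate the plane by `exp (-μ i)`, where `μ` is the midpoint of the range of the turning angle
`θ`. Since `θ` first moves monotonically one way and then the other, each by at most `π`, its
range has length at most `π`, so every rotated tangent lies in the closed right half-plane and
the tangent at a time where `θ = μ` lies in the open one. The real part of the rotated curve is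
therefore nondecreasing and not constant, so the rotated chord lies in the open right
half-plane; and dividing a vector of the closed right half-plane by one of the open right
half-plane subtracts arguments without wrapping around.
-/

namespace Complex

theorem arg_div_of_re_nonneg_of_re_pos {x w : ℂ} (hx : x ≠ 0) (hx' : 0 ≤ x.re) (hw : 0 < w.re) :
    arg (x / w) = arg x - arg w := by
  have hw₀ : w ≠ 0 := fun h => by simp [h] at hw
  have hx_arg := abs_le.1 (abs_arg_le_pi_div_two_iff.2 hx')
  have hw_arg := abs_lt.1 (abs_arg_lt_pi_div_two_iff.2 (Or.inl hw))
  rw [← arg_coe_angle_toReal_eq_arg, arg_div_coe_angle hx hw₀, ← Real.Angle.coe_sub,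
    Real.Angle.toReal_coe_eq_self_iff_mem_Ioc]
  constructor <;> linarith

theorem abs_arg_div_lt_pi_of_re_nonneg_of_re_pos {x w : ℂ} (hx : x ≠ 0) (hx' : 0 ≤ x.re)
    (hw : 0 < w.re) : |arg (x / w)| < π := by
  rw [arg_div_of_re_nonneg_of_re_pos hx hx' hw]
  have hx_arg := abs_le.1 (abs_arg_le_pi_div_two_iff.2 hx')
  have hw_arg := abs_lt.1 (abs_arg_lt_pi_div_two_iff.2 (Or.inl hw))
  rw [abs_lt]
  constructor <;> linarith

theorem abs_arg_div_sub_arg_div_le_pi {x y w : ℂ} (hx : x ≠ 0) (hx' : 0 ≤ x.re) (hy : y ≠ 0)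
    (hy' : 0 ≤ y.re) (hw : 0 < w.re) : |arg (x / w) - arg (y / w)| ≤ π := by
  rw [arg_div_of_re_nonneg_of_re_pos hx hx' hw, arg_div_of_re_nonneg_of_re_pos hy hy' hw,
    sub_sub_sub_cancel_right]
  have hx_arg := abs_le.1 (abs_arg_le_pi_div_two_iff.2 hx')
  have hy_arg := abs_le.1 (abs_arg_le_pi_div_two_iff.2 hy')
  rw [abs_le]
  constructor <;> linarith

end Complex

theorem lt_of_hasDerivWithinAt_nonneg_of_pos {g g' : ℝ → ℝ} {a b t₀ : ℝ} (hab : a < b)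
    (hg : ∀ t ∈ Icc a b, HasDerivWithinAt g (g' t) (Icc a b) t)
    (hg' : ∀ t ∈ Icc a b, 0 ≤ g' t) (ht₀ : t₀ ∈ Icc a b) (hpos : 0 < g' t₀) : g a < g b := by
  have hmono : MonotoneOn g (Icc a b) :=
    monotoneOn_of_hasDerivWithinAt_nonneg (convex_Icc a b)
      (fun t ht => (hg t ht).continuousWithinAt)
      (fun t ht => (hg t (interior_subset ht)).mono interior_subset)
      (fun t ht => hg' t (interior_subset ht))
  have ha : a ∈ Icc a b := left_mem_Icc.2 hab.le
  have hb : b ∈ Icc a b := right_mem_Icc.2 hab.le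
  -- If `g a = g b`, then `g` is constant on `[a, b]`, so its derivative at `t₀` vanishes.
  refine (hmono ha hb hab.le).lt_of_ne fun heq => hpos.ne' ?_
  have hconst : ∀ t ∈ Icc a b, g t = g a := fun t ht =>
    le_antisymm (heq ▸ hmono ht hb ht.2) (hmono ha ht ht.1)
  exact (uniqueDiffOn_Icc hab t₀ ht₀).eq_deriv _ (hg t₀ ht₀)
    ((hasDerivWithinAt_const t₀ _ (g a)).congr hconst (hconst t₀ ht₀))

theorem abs_sub_le_of_monotoneOn_of_antitoneOn {θ : ℝ → ℝ} {a b c r : ℝ} (hc : c ∈ Icc a b)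
    (h₁ : MonotoneOn θ (Icc a c)) (h₂ : AntitoneOn θ (Icc c b)) (hac : |θ c - θ a| ≤ r)
    (hcb : |θ b - θ c| ≤ r) {t t' : ℝ} (ht : t ∈ Icc a b) (ht' : t' ∈ Icc a b) :
    |θ t - θ t'| ≤ r := by
  have hrange : ∀ t ∈ Icc a b, θ c - r ≤ θ t ∧ θ t ≤ θ c := by
    intro t ht
    have hac' := (abs_le.1 hac).2
    have hcb' := (abs_le.1 hcb).1
    rcases le_total t c with htc | hct
    · have := h₁ ⟨le_rfl, hc.1⟩ ⟨ht.1, htc⟩ ht.1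
      exact ⟨by linarith, h₁ ⟨ht.1, htc⟩ ⟨hc.1, le_rfl⟩ htc⟩
    · have := h₂ ⟨hct, ht.2⟩ ⟨hc.2, le_rfl⟩ ht.2
      exact ⟨by linarith, h₂ ⟨le_rfl, hc.2⟩ ⟨hct, ht.2⟩ hct⟩
  obtain ⟨h, h'⟩ := hrange t ht
  obtain ⟨k, k'⟩ := hrange t' ht'
  rw [abs_le]
  constructor <;> linarith

namespace SCurve

variable (s : SCurve)

theorem abs_θ_sub_θ_le_pi {t t' : ℝ} (ht : t ∈ Icc s.a s.b) (ht' : t' ∈ Icc s.a s.b) :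
    |s.θ t - s.θ t'| ≤ π := by
  rcases s.hmono with ⟨h₁, h₂⟩ | ⟨h₁, h₂⟩
  · exact abs_sub_le_of_monotoneOn_of_antitoneOn s.hc h₁ h₂ s.hturn₁ s.hturn₂ ht ht'
  · have := abs_sub_le_of_monotoneOn_of_antitoneOn (θ := fun x => -s.θ x) (r := π) s.hc
      h₁.neg h₂.neg (by rw [neg_sub_neg, abs_sub_comm]; exact s.hturn₁)
      (by rw [neg_sub_neg, abs_sub_comm]; exact s.hturn₂) ht ht'
    rwa [neg_sub_neg, abs_sub_comm] at this

theorem exists_mean_direction : ∃ μ : ℝ, (∀ t ∈ Icc s.a s.b, |s.θ t - μ| ≤ π / 2) ∧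
    ∃ t₀ ∈ Icc s.a s.b, s.θ t₀ = μ := by
  have hne : (Icc s.a s.b).Nonempty := nonempty_Icc.2 s.hab.le
  obtain ⟨p, hp, hmin⟩ := isCompact_Icc.exists_isMinOn hne s.hθcont
  obtain ⟨q, hq, hmax⟩ := isCompact_Icc.exists_isMaxOn hne s.hθcont
  have hpq := (abs_le.1 (s.abs_θ_sub_θ_le_pi hq hp)).2
  refine ⟨(s.θ p + s.θ q) / 2, fun t ht => ?_, ?_⟩
  · have : s.θ p ≤ s.θ t := hmin ht
    have : s.θ t ≤ s.θ q := hmax ht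
    rw [abs_le]
    constructor <;> linarith
  · have hmid : (s.θ p + s.θ q) / 2 ∈ Icc (s.θ p) (s.θ q) := by
      have : s.θ p ≤ s.θ q := hmin hq
      constructor <;> linarith
    exact isPreconnected_Icc.intermediate_value hp hq s.hθcont hmid

theorem hasDerivAt {t : ℝ} (ht : t ∈ Icc s.a s.b) : HasDerivAt s.f (deriv s.f t) t :=
  (differentiableAt_of_deriv_ne_zero (s.hne t ht)).hasDerivAt

theorem re_exp_mul_deriv (μ : ℝ) {t : ℝ} (ht : t ∈ Icc s.a s.b) :
    (exp (-(μ : ℂ) * I) * deriv s.f t).re = ‖deriv s.f t‖ * Real.cos (s.θ t - μ) := by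
  have hrot : exp (-(μ : ℂ) * I) * deriv s.f t = ‖deriv s.f t‖ * exp ((s.θ t - μ : ℝ) * I) := by
    conv_lhs => rw [s.hθ t ht, mul_left_comm, ← Complex.exp_add]
    push_cast
    ring_nf
  rw [hrot, re_ofReal_mul, exp_ofReal_mul_I_re]

theorem re_exp_mul_deriv_nonneg {μ : ℝ} (hμ : ∀ t ∈ Icc s.a s.b, |s.θ t - μ| ≤ π / 2) {t : ℝ}
    (ht : t ∈ Icc s.a s.b) : 0 ≤ (exp (-(μ : ℂ) * I) * deriv s.f t).re := by
  rw [s.re_exp_mul_deriv μ ht]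
  exact mul_nonneg (norm_nonneg _) (Real.cos_nonneg_of_mem_Icc (abs_le.1 (hμ t ht)))

theorem re_exp_mul_chord_pos {μ : ℝ} (hμ : ∀ t ∈ Icc s.a s.b, |s.θ t - μ| ≤ π / 2)
    {t₀ : ℝ} (ht₀ : t₀ ∈ Icc s.a s.b) (hθt₀ : s.θ t₀ = μ) :
    0 < (exp (-(μ : ℂ) * I) * (s.f s.b - s.f s.a)).re := by
  rw [mul_sub, sub_re, sub_pos]
  refine lt_of_hasDerivWithinAt_nonneg_of_pos s.hab
    (g := fun t => (exp (-(μ : ℂ) * I) * s.f t).re)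
    (g' := fun t => (exp (-(μ : ℂ) * I) * deriv s.f t).re)
    (fun t ht => ?_) (fun t ht => ?_) ht₀ ?_
  · exact (Complex.reCLM.hasFDerivAt.comp_hasDerivAt t
      ((s.hasDerivAt ht).const_mul _)).hasDerivWithinAt
  · exact s.re_exp_mul_deriv_nonneg hμ ht
  · rw [s.re_exp_mul_deriv μ ht₀, hθt₀, sub_self, Real.cos_zero, mul_one]
    exact norm_pos_iff.2 (s.hne t₀ ht₀)

end SCurve

theorem scurve_chord_angle_ineq (s : SCurve) :
    |s.alpha| < π ∧ |s.beta| < π ∧ |s.alpha - s.beta| ≤ π := by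
  obtain ⟨μ, hμ, t₀, ht₀, hθt₀⟩ := s.exists_mean_direction
  set u : ℂ := exp (-(μ : ℂ) * I)
  have hu : u ≠ 0 := exp_ne_zero _
  have hchord : 0 < (u * (s.f s.b - s.f s.a)).re := s.re_exp_mul_chord_pos hμ ht₀ hθt₀
  have htangent : ∀ t ∈ Icc s.a s.b, u * deriv s.f t ≠ 0 ∧ 0 ≤ (u * deriv s.f t).re :=
    fun t ht => ⟨mul_ne_zero hu (s.hne t ht), s.re_exp_mul_deriv_nonneg hμ ht⟩
  obtain ⟨ha, ha'⟩ := htangent s.a (left_mem_Icc.2 s.hab.le)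
  obtain ⟨hb, hb'⟩ := htangent s.b (right_mem_Icc.2 s.hab.le)
  have hα : s.alpha = arg (u * deriv s.f s.a / (u * (s.f s.b - s.f s.a))) := by
    rw [SCurve.alpha, mul_div_mul_left _ _ hu]
  have hβ : s.beta = arg (u * deriv s.f s.b / (u * (s.f s.b - s.f s.a))) := by
    rw [SCurve.beta, mul_div_mul_left _ _ hu]
  rw [hα, hβ]
  exact ⟨abs_arg_div_lt_pi_of_re_nonneg_of_re_pos ha ha' hchord,
    abs_arg_div_lt_pi_of_re_nonneg_of_re_pos hb hb' hchord,
    abs_arg_div_sub_arg_div_le_pi ha ha' hb hb' hchord⟩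
end

section
/- Let 0 < α < π, |β| ≤ α, β > α − π, and define for γ in Γ = [α−π, β] ∩ (−∞, 0): y₁(γ) = (1/2)∫₀^{α−γ} √(sin τ) dτ, y₂(γ) = (1/2)∫₀^{β−γ} √(sin τ) dτ, H(γ) = y₁(γ) + y₂(γ), and σ(γ) = cos γ + (sin γ / H(γ))·(√(sin(α−γ)) + √(sin(β−γ))). If additionally (α,β) ∈ (0, π/2] × [−π/2, π/2] with (α,β) ≠ (π/2, π/2) and γ ∈ Γ satisfies γ ≤ −π/2, then σ(γ) < 0. -/
open Real Set

noncomputable def y₁ (α : ℝ) (γ : ℝ) : ℝ := (1/2) * ∫ τ in (0:ℝ)..(α - γ), Real.sqrt (Real.sin τ)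
noncomputable def y₂ (β : ℝ) (γ : ℝ) : ℝ := (1/2) * ∫ τ in (0:ℝ)..(β - γ), Real.sqrt (Real.sin τ)
noncomputable def Hfun (α β : ℝ) (γ : ℝ) : ℝ := y₁ α γ + y₂ β γ
noncomputable def σfun (α β : ℝ) (γ : ℝ) : ℝ :=
  Real.cos γ + (Real.sin γ / Hfun α β γ) *
    (Real.sqrt (Real.sin (α - γ)) + Real.sqrt (Real.sin (β - γ)))

theorem sigma_neg (α β γ : ℝ)
    (hα : 0 < α) (hα' : α < π) (hβ : |β| ≤ α) (hβ' : β > α - π)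
    (hα2 : α ≤ π/2) (hβ2 : |β| ≤ π/2) (hne : (α, β) ≠ (π/2, π/2))
    (hγΓ : γ ∈ Icc (α - π) β ∩ Iio (0:ℝ)) (hγ : γ ≤ -(π/2)) :
    σfun α β γ < 0 := by
  obtain ⟨⟨hγ1, hγ2⟩, hγ3⟩ := hγΓ
  have hπ := Real.pi_pos
  have hγlb : -π < γ := by linarith
  -- sin γ < 0
  have hsinγ : Real.sin γ < 0 := by
    have : 0 < Real.sin (-γ) := Real.sin_pos_of_pos_of_lt_pi (by linarith) (by linarith)
    rw [Real.sin_neg] at this; linarith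
  -- y₁ > 0
  have hag : α - γ ≤ π := by linarith
  have hag0 : 0 < α - γ := by linarith
  have hy1 : 0 < y₁ α γ := by
    have hi : IntervalIntegrable (fun τ => Real.sqrt (Real.sin τ)) MeasureTheory.volume 0 (α - γ) :=
      (Real.continuous_sqrt.comp Real.continuous_sin).intervalIntegrable _ _
    have := intervalIntegral.intervalIntegral_pos_of_pos_on hi (fun x hx => by
      exact Real.sqrt_pos.mpr (Real.sin_pos_of_pos_of_lt_pi hx.1 (lt_of_lt_of_le hx.2 hag)))
      hag0
    unfold y₁; linarith
  -- y₂ ≥ 0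
  have hy2 : 0 ≤ y₂ β γ := by
    have h1 : (0:ℝ) ≤ β - γ := by linarith
    have := intervalIntegral.integral_nonneg (μ := MeasureTheory.volume) h1 (fun x _ => Real.sqrt_nonneg (Real.sin x))
    unfold y₂; linarith
  have hH : 0 < Hfun α β γ := by unfold Hfun; linarith
  have hS : 0 ≤ Real.sqrt (Real.sin (α - γ)) + Real.sqrt (Real.sin (β - γ)) := by
    positivity
  have hfrac : Real.sin γ / Hfun α β γ < 0 := div_neg_of_neg_of_pos hsinγ hH
  rcases lt_or_eq_of_le hγ with h | h
  · -- γ < -π/2 : cos γ < 0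
    have hcos : Real.cos γ < 0 := by
      have : Real.cos (-γ) < 0 := Real.cos_neg_of_pi_div_two_lt_of_lt (by linarith) (by linarith)
      rw [Real.cos_neg] at this; linarith
    have : (Real.sin γ / Hfun α β γ) *
        (Real.sqrt (Real.sin (α - γ)) + Real.sqrt (Real.sin (β - γ))) ≤ 0 :=
      mul_nonpos_of_nonpos_of_nonneg (le_of_lt hfrac) hS
    unfold σfun; linarith
  · -- γ = -π/2 : cos γ = 0, need S > 0
    have hcos : Real.cos γ = 0 := by rw [h]; simp
    have hSpos : 0 < Real.sqrt (Real.sin (α - γ)) + Real.sqrt (Real.sin (β - γ)) := by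
      have hαg : α - γ = α + π/2 := by rw [h]; ring
      have hβg : β - γ = β + π/2 := by rw [h]; ring
      rw [hαg, hβg, Real.sin_add_pi_div_two, Real.sin_add_pi_div_two]
      rcases lt_or_eq_of_le hα2 with hlt | heq
      · have : 0 < Real.sqrt (Real.cos α) := Real.sqrt_pos.mpr
          (Real.cos_pos_of_mem_Ioo ⟨by linarith, hlt⟩)
        have := Real.sqrt_nonneg (Real.cos β); linarith
      · have hβne : β ≠ π/2 := by
          intro hb; exact hne (by rw [heq, hb])
        have hβlt : β < π/2 := lt_of_le_of_ne (le_of_abs_le hβ2) hβne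
        have hβgt : -(π/2) < β := by rw [heq] at hβ'; linarith
        have : 0 < Real.sqrt (Real.cos β) := Real.sqrt_pos.mpr
          (Real.cos_pos_of_mem_Ioo ⟨hβgt, hβlt⟩)
        have := Real.sqrt_nonneg (Real.cos α); linarith
    have := mul_neg_of_neg_of_pos hfrac hSpos
    unfold σfun; linarith
end

section
/- Let 0 < α ≤ π/2, |β| ≤ α, β > −π/2, and define H(γ) = (1/2)∫₀^{α−γ} √(sin τ) dτ + (1/2)∫₀^{β−γ} √(sin τ) dτ and σ(γ) = cos γ + (sin γ / H(γ))·(√(sin(α−γ)) + √(sin(β−γ))) for γ in the interior of Γ = [α−π, β] ∩ (−∞, 0). If σ(γ) = 0 and −π/2 < γ < β, then σ'(γ) > 0. -/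
open Real Set

lemma sigma_alg (s c sA sB cA cB H V : ℝ)
    (hs : s < 0) (hc : 0 < c) (hsA : 0 < sA) (hsB : 0 < sB) (hH : 0 < H)
    (hrel : s * (sA + sB) = -(c * H))
    (hK1 : 0 < (2 * s ^ 2 + c ^ 2) * sA ^ 2 - s * c * cA)
    (hK2 : 0 < (2 * s ^ 2 + c ^ 2) * sB ^ 2 - s * c * cB)
    (hV : V = -s + ((c * H - s * (1/2 * (sA * (0 - 1)) + 1/2 * (sB * (0 - 1)))) / H ^ 2
        * (sA + sB) + s / H * (1 / (2 * sA) * (cA * (0 - 1)) + 1 / (2 * sB) * (cB * (0 - 1))))) :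
    0 < V := by
  have hS : 0 < sA + sB := by linarith
  have hCH : c * H = (-s) * (sA + sB) := by linear_combination hrel
  have hP : 0 < sB * ((2 * s ^ 2 + c ^ 2) * sA ^ 2 - s * c * cA)
      + sA * ((2 * s ^ 2 + c ^ 2) * sB ^ 2 - s * c * cB) := by
    have := mul_pos hsB hK1
    have := mul_pos hsA hK2
    linarith
  have hbr : 0 < 2 * H ^ 2 * sA * sB + sA * sB * (sA + sB) ^ 2 + H * (cA * sB + cB * sA) := by
    have h : c ^ 2 * (2 * H ^ 2 * sA * sB + sA * sB * (sA + sB) ^ 2 + H * (cA * sB + cB * sA))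
        = (sA + sB) * (sB * ((2 * s ^ 2 + c ^ 2) * sA ^ 2 - s * c * cA)
          + sA * ((2 * s ^ 2 + c ^ 2) * sB ^ 2 - s * c * cB)) := by
      linear_combination (2 * sA * sB * (c * H + (-s) * (sA + sB)) + c * (cA * sB + cB * sA)) * hCH
    have hc2 : 0 < c ^ 2 := by positivity
    nlinarith [mul_pos hS hP]
  have hE0 : V * (H ^ 2 * (2 * sA * sB)) = -2 * s * H ^ 2 * sA * sB
      + 2 * sA * sB * (sA + sB) * c * H + sA * sB * (sA + sB) ^ 2 * s
      - s * H * (cA * sB + cB * sA) := by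
    rw [hV]
    field_simp
    ring
  have hE : V * (H ^ 2 * (2 * sA * sB)) = (-s) * (2 * H ^ 2 * sA * sB
      + sA * sB * (sA + sB) ^ 2 + H * (cA * sB + cB * sA)) := by
    linear_combination hE0 + (2 * sA * sB * (sA + sB)) * hrel
  have hden : 0 < H ^ 2 * (2 * sA * sB) := by positivity
  have hpos : 0 < V * (H ^ 2 * (2 * sA * sB)) := by
    rw [hE]
    exact mul_pos (neg_pos.mpr hs) hbr
  have hVform : V = (V * (H ^ 2 * (2 * sA * sB))) / (H ^ 2 * (2 * sA * sB)) := by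
    field_simp
  rw [hVform]
  exact div_pos hpos hden

theorem sigma_deriv_pos (α β γ : ℝ)
    (hα : 0 < α) (hα' : α ≤ π/2) (hβ : |β| ≤ α) (hβ' : β > -(π/2))
    (hγ1 : α - π < γ) (hγ0 : γ < 0)
    (hγ2 : -(π/2) < γ) (hγ3 : γ < β)
    (hσ : σfun α β γ = 0) :
    deriv (σfun α β) γ > 0 := by
  have hπ : (0:ℝ) < π := Real.pi_pos
  have hA0 : 0 < α - γ := by linarith
  have hAπ : α - γ < π := by linarith
  have hB0 : 0 < β - γ := by linarith
  have hβle : β ≤ π/2 := le_trans (le_trans (le_abs_self β) hβ) hα'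
  have hβge : -(π/2) ≤ β := le_of_lt hβ'
  have hBπ : β - γ < π := by linarith
  have hsinA : 0 < Real.sin (α - γ) := Real.sin_pos_of_pos_of_lt_pi hA0 hAπ
  have hsinB : 0 < Real.sin (β - γ) := Real.sin_pos_of_pos_of_lt_pi hB0 hBπ
  have hsApos : 0 < Real.sqrt (Real.sin (α - γ)) := Real.sqrt_pos.mpr hsinA
  have hsBpos : 0 < Real.sqrt (Real.sin (β - γ)) := Real.sqrt_pos.mpr hsinB
  have hsA2 : Real.sqrt (Real.sin (α - γ)) ^ 2 = Real.sin (α - γ) := Real.sq_sqrt hsinA.le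
  have hsB2 : Real.sqrt (Real.sin (β - γ)) ^ 2 = Real.sin (β - γ) := Real.sq_sqrt hsinB.le
  have hs : Real.sin γ < 0 := Real.sin_neg_of_neg_of_neg_pi_lt hγ0 (by linarith)
  have hc : 0 < Real.cos γ := Real.cos_pos_of_mem_Ioo ⟨hγ2, by linarith⟩
  have hcosα : 0 ≤ Real.cos α := Real.cos_nonneg_of_mem_Icc ⟨by linarith, hα'⟩
  have hcosβ : 0 ≤ Real.cos β := Real.cos_nonneg_of_mem_Icc ⟨hβge, hβle⟩
  -- continuity of the integrand
  have hf : Continuous fun t => Real.sqrt (Real.sin t) :=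
    Real.continuous_sqrt.comp Real.continuous_sin
  -- positivity of H
  have hy1pos : 0 < y₁ α γ := by
    have h : 0 < ∫ τ in (0:ℝ)..(α - γ), Real.sqrt (Real.sin τ) := by
      apply intervalIntegral.intervalIntegral_pos_of_pos_on (hf.intervalIntegrable _ _)
      · intro x hx
        exact Real.sqrt_pos.mpr (Real.sin_pos_of_pos_of_lt_pi hx.1 (hx.2.trans hAπ))
      · exact hA0
    unfold y₁; linarith
  have hy2pos : 0 < y₂ β γ := by
    have h : 0 < ∫ τ in (0:ℝ)..(β - γ), Real.sqrt (Real.sin τ) := by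
      apply intervalIntegral.intervalIntegral_pos_of_pos_on (hf.intervalIntegrable _ _)
      · intro x hx
        exact Real.sqrt_pos.mpr (Real.sin_pos_of_pos_of_lt_pi hx.1 (hx.2.trans hBπ))
      · exact hB0
    unfold y₂; linarith
  have hHpos : 0 < Hfun α β γ := by unfold Hfun; linarith
  have hHne : Hfun α β γ ≠ 0 := ne_of_gt hHpos
  -- derivative of x ↦ α - x and x ↦ β - x
  have hlin1 : HasDerivAt (fun x : ℝ => α - x) (0 - 1) γ :=
    (hasDerivAt_const γ α).sub (hasDerivAt_id γ)
  have hlin2 : HasDerivAt (fun x : ℝ => β - x) (0 - 1) γ :=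
    (hasDerivAt_const γ β).sub (hasDerivAt_id γ)
  -- derivative of y₁, y₂
  have hF1 : HasDerivAt (fun u => ∫ t in (0:ℝ)..u, Real.sqrt (Real.sin t))
      (Real.sqrt (Real.sin (α - γ))) (α - γ) :=
    intervalIntegral.integral_hasDerivAt_right (hf.intervalIntegrable _ _)
      (hf.stronglyMeasurable.stronglyMeasurableAtFilter) hf.continuousAt
  have hF2 : HasDerivAt (fun u => ∫ t in (0:ℝ)..u, Real.sqrt (Real.sin t))
      (Real.sqrt (Real.sin (β - γ))) (β - γ) :=
    intervalIntegral.integral_hasDerivAt_right (hf.intervalIntegrable _ _)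
      (hf.stronglyMeasurable.stronglyMeasurableAtFilter) hf.continuousAt
  have hy1d : HasDerivAt (y₁ α) ((1/2) * (Real.sqrt (Real.sin (α - γ)) * (0 - 1))) γ := by
    exact ((hF1.comp γ hlin1)).const_mul (1/2)
  have hy2d : HasDerivAt (y₂ β) ((1/2) * (Real.sqrt (Real.sin (β - γ)) * (0 - 1))) γ := by
    exact ((hF2.comp γ hlin2)).const_mul (1/2)
  have hHd : HasDerivAt (Hfun α β)
      ((1/2) * (Real.sqrt (Real.sin (α - γ)) * (0 - 1)) +
       (1/2) * (Real.sqrt (Real.sin (β - γ)) * (0 - 1))) γ := hy1d.add hy2d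
  -- derivative of the sqrt-sin terms
  have hsinAd : HasDerivAt (fun x : ℝ => Real.sin (α - x)) (Real.cos (α - γ) * (0 - 1)) γ :=
    (Real.hasDerivAt_sin (α - γ)).comp γ hlin1
  have hsinBd : HasDerivAt (fun x : ℝ => Real.sin (β - x)) (Real.cos (β - γ) * (0 - 1)) γ :=
    (Real.hasDerivAt_sin (β - γ)).comp γ hlin2
  have hsqA : HasDerivAt (fun x : ℝ => Real.sqrt (Real.sin (α - x)))
      (1 / (2 * Real.sqrt (Real.sin (α - γ))) * (Real.cos (α - γ) * (0 - 1))) γ :=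
    (Real.hasDerivAt_sqrt (ne_of_gt hsinA)).comp γ hsinAd
  have hsqB : HasDerivAt (fun x : ℝ => Real.sqrt (Real.sin (β - x)))
      (1 / (2 * Real.sqrt (Real.sin (β - γ))) * (Real.cos (β - γ) * (0 - 1))) γ :=
    (Real.hasDerivAt_sqrt (ne_of_gt hsinB)).comp γ hsinBd
  -- assemble the derivative of σ
  set V : ℝ :=
    -Real.sin γ +
      ((Real.cos γ * Hfun α β γ -
          Real.sin γ * ((1/2) * (Real.sqrt (Real.sin (α - γ)) * (0 - 1)) +
            (1/2) * (Real.sqrt (Real.sin (β - γ)) * (0 - 1)))) / Hfun α β γ ^ 2 *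
          (Real.sqrt (Real.sin (α - γ)) + Real.sqrt (Real.sin (β - γ))) +
        Real.sin γ / Hfun α β γ *
          (1 / (2 * Real.sqrt (Real.sin (α - γ))) * (Real.cos (α - γ) * (0 - 1)) +
           1 / (2 * Real.sqrt (Real.sin (β - γ))) * (Real.cos (β - γ) * (0 - 1)))) with hV
  have hσd : HasDerivAt (σfun α β) V γ := by
    exact (Real.hasDerivAt_cos γ).add
      (((Real.hasDerivAt_sin γ).div hHd hHne).mul (hsqA.add hsqB))
  rw [hσd.deriv]
  -- use σ = 0
  have hσ' : Real.cos γ + Real.sin γ / Hfun α β γ *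
      (Real.sqrt (Real.sin (α - γ)) + Real.sqrt (Real.sin (β - γ))) = 0 := hσ
  have hrel : Real.sin γ * (Real.sqrt (Real.sin (α - γ)) + Real.sqrt (Real.sin (β - γ)))
      = -(Real.cos γ * Hfun α β γ) := by
    field_simp at hσ'
    linarith
  have hHval : Hfun α β γ =
      -(Real.sin γ * (Real.sqrt (Real.sin (α - γ)) + Real.sqrt (Real.sin (β - γ)))) /
        Real.cos γ := by
    field_simp
    linarith
  -- key pointwise inequalities
  have hsinα : 0 < Real.sin α := Real.sin_pos_of_pos_of_lt_pi hα (by linarith)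
  have hpy : Real.sin γ ^ 2 + Real.cos γ ^ 2 = 1 := Real.sin_sq_add_cos_sq γ
  have hK1 : 0 < (2 * Real.sin γ ^ 2 + Real.cos γ ^ 2) * Real.sin (α - γ)
      - Real.sin γ * Real.cos γ * Real.cos (α - γ) := by
    have key : (2 * Real.sin γ ^ 2 + Real.cos γ ^ 2) * Real.sin (α - γ)
        - Real.sin γ * Real.cos γ * Real.cos (α - γ)
        = Real.cos γ * Real.sin α - 2 * Real.sin γ * Real.cos α := by
      rw [Real.sin_sub, Real.cos_sub]
      linear_combination (Real.cos γ * Real.sin α - 2 * Real.sin γ * Real.cos α) * hpy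
    rw [key]
    have h1 := mul_pos hc hsinα
    have h2 := mul_nonneg (neg_nonneg.mpr hs.le) hcosα
    linarith
  have hK2 : 0 < (2 * Real.sin γ ^ 2 + Real.cos γ ^ 2) * Real.sin (β - γ)
      - Real.sin γ * Real.cos γ * Real.cos (β - γ) := by
    have key : (2 * Real.sin γ ^ 2 + Real.cos γ ^ 2) * Real.sin (β - γ)
        - Real.sin γ * Real.cos γ * Real.cos (β - γ)
        = Real.cos γ * Real.sin β - 2 * Real.sin γ * Real.cos β := by
      rw [Real.sin_sub, Real.cos_sub]
      linear_combination (Real.cos γ * Real.sin β - 2 * Real.sin γ * Real.cos β) * hpy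
    rw [key]
    have e1 : Real.sin (β - γ) = Real.sin β * Real.cos γ - Real.cos β * Real.sin γ :=
      Real.sin_sub β γ
    have h2 := mul_nonneg (neg_nonneg.mpr hs.le) hcosβ
    linarith [hsinB, e1]
  have hK1' : 0 < (2 * Real.sin γ ^ 2 + Real.cos γ ^ 2) * Real.sqrt (Real.sin (α - γ)) ^ 2
      - Real.sin γ * Real.cos γ * Real.cos (α - γ) := by rw [hsA2]; exact hK1
  have hK2' : 0 < (2 * Real.sin γ ^ 2 + Real.cos γ ^ 2) * Real.sqrt (Real.sin (β - γ)) ^ 2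
      - Real.sin γ * Real.cos γ * Real.cos (β - γ) := by rw [hsB2]; exact hK2
  exact sigma_alg (Real.sin γ) (Real.cos γ) (Real.sqrt (Real.sin (α - γ)))
    (Real.sqrt (Real.sin (β - γ))) (Real.cos (α - γ)) (Real.cos (β - γ))
    (Hfun α β γ) V hs hc hsApos hsBpos hHpos hrel hK1' hK2' hV
end

section
/- Let t₁ < t₂ with sin t₁ ≠ 0 or sin t₂ ≠ 0, and define Δx = sin t₂ − sin t₁, Δξ = ξ(t₂) − ξ(t₁) > 0, l² = Δx² + Δξ². Then the following energy-gradient identity holds: −l sin(t₁)·∂α/∂t₁ + l sin(t₂)·∂β/∂t₁ = ∂/∂t₁ (l·Δξ), where α, β are the chord angles of R on [t₁,t₂] and the partials are computed via ∂α/∂t₁ = |R'(t₁)|(sin α/l + 2 sin t₁), ∂β/∂t₁ = |R'(t₁)| sin α/l, with l |R'(t₁)| sin α = −cos t₁·Δξ + ξ'(t₁)·Δx. -/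
open Real Complex

noncomputable def alphaAng (t₁ t₂ : ℝ) : ℝ := Complex.arg (deriv R t₁ / (R t₂ - R t₁))
noncomputable def betaAng (t₁ t₂ : ℝ) : ℝ := Complex.arg (deriv R t₂ / (R t₂ - R t₁))

/-!
Write `v = R'(t₁)` and `Δ = R t₂ - R t₁`. Since `ξ` is strictly increasing, `Δ` lies in the open
upper half plane, while every velocity `R'(t) ≠ 0` lies in the closed one; so both chord angles
are arguments of quotients in the slit plane. Their derivatives are therefore imaginary parts of
logarithmic derivatives, `α' = Im (R''/R') + Im (v/Δ)` and `β' = Im (v/Δ)`, while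
`l' = l · Re (-v/Δ)`. The curvature term contributes `sin t₁ · Im (R''/R') = 2 ξ'(t₁)`, and the two
sides of the identity then differ by `l (Δx · Im w + Δξ · Re w - ξ'(t₁))` with `w = v/Δ`, which
vanishes because `Im (w Δ) = Im v = ξ'(t₁)`.
-/

theorem Complex.div_mem_slitPlane_of_im_nonneg {z w : ℂ} (hz : z ≠ 0) (hz_im : 0 ≤ z.im)
    (hw : 0 < w.im) : z / w ∈ slitPlane := by
  rw [mem_slitPlane_iff_not_le_zero]
  intro hle
  set q := z / w
  obtain ⟨hq_re, hq_im⟩ : q.re ≤ 0 ∧ q.im = 0 := Complex.le_def.1 hle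
  have hzq : z = q * w := (div_mul_cancel₀ z (ne_of_apply_ne im hw.ne')).symm
  have hz_im_eq : z.im = q.re * w.im := by rw [hzq, mul_im, hq_im]; ring
  have hq : q = 0 := Complex.ext (by rw [zero_re]; nlinarith) hq_im
  exact hz (by rw [hzq, hq, zero_mul])

theorem HasDerivAt.arg {f : ℝ → ℂ} {f' : ℂ} {x : ℝ} (hf : HasDerivAt f f' x)
    (hx : f x ∈ slitPlane) : HasDerivAt (fun s => arg (f s)) (f' / f x).im x := by
  simpa only [Function.comp_def, imCLM_apply, log_im] using
    imCLM.hasFDerivAt.comp_hasDerivAt x (hf.clog_real hx)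

theorem HasDerivAt.norm_complex {f : ℝ → ℂ} {f' : ℂ} {x : ℝ} (hf : HasDerivAt f f' x)
    (hx : f x ≠ 0) : HasDerivAt (fun s => ‖f s‖) (‖f x‖ * (f' / f x).re) x := by
  have hpos : 0 < ‖f x‖ := norm_pos_iff.2 hx
  have hsqrt := (Real.hasDerivAt_sqrt (pow_pos hpos 2).ne').comp x hf.norm_sq
  simp only [Function.comp_def, Real.sqrt_sq (norm_nonneg _)] at hsqrt
  refine hsqrt.congr_deriv ?_
  rw [Complex.inner, div_eq_mul_inv f', inv_def, ← mul_assoc f', re_mul_ofReal, normSq_eq_norm_sq]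
  field_simp

noncomputable def xiDeriv (t : ℝ) : ℝ := Real.sin t ^ 2 / √(1 + Real.sin t ^ 2)

noncomputable def velocity (t : ℝ) : ℂ := (Real.cos t : ℂ) + I * (xiDeriv t : ℂ)

noncomputable def acceleration (t : ℝ) : ℂ :=
  ((-Real.sin t : ℝ) : ℂ) + I * ((Real.cos t * Real.sin t * (2 + Real.sin t ^ 2) /
    √(1 + Real.sin t ^ 2) ^ 3 : ℝ) : ℂ)

@[simp] lemma R_re (t : ℝ) : (R t).re = Real.sin t := by simp [R, -ofReal_sin]
@[simp] lemma R_im (t : ℝ) : (R t).im = xi t := by simp [R, -ofReal_sin]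
@[simp] lemma velocity_re (t : ℝ) : (velocity t).re = Real.cos t := by simp [velocity, -ofReal_cos]
@[simp] lemma velocity_im (t : ℝ) : (velocity t).im = xiDeriv t := by simp [velocity, -ofReal_cos]

lemma sqrt_one_add_sin_sq_pos (t : ℝ) : 0 < √(1 + Real.sin t ^ 2) :=
  Real.sqrt_pos.2 (by positivity)

lemma sq_sqrt_one_add_sin_sq (t : ℝ) : √(1 + Real.sin t ^ 2) ^ 2 = 1 + Real.sin t ^ 2 :=
  Real.sq_sqrt (by positivity)

lemma continuous_xiDeriv : Continuous xiDeriv :=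
  (Real.continuous_sin.pow 2).div (by fun_prop) fun t => (sqrt_one_add_sin_sq_pos t).ne'

lemma xiDeriv_nonneg (t : ℝ) : 0 ≤ xiDeriv t := by unfold xiDeriv; positivity

lemma hasDerivAt_xi_s17 (t : ℝ) : HasDerivAt xi (xiDeriv t) t :=
  intervalIntegral.integral_hasDerivAt_right (continuous_xiDeriv.intervalIntegrable 0 t)
    continuous_xiDeriv.stronglyMeasurable.stronglyMeasurableAtFilter continuous_xiDeriv.continuousAt

lemma xi_sub_xi_eq_integral (a b : ℝ) : xi b - xi a = ∫ τ in a..b, xiDeriv τ :=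
  intervalIntegral.integral_interval_sub_left (continuous_xiDeriv.intervalIntegrable 0 b)
    (continuous_xiDeriv.intervalIntegrable 0 a)

open MeasureTheory in
lemma xi_strictMono : StrictMono xi := by
  intro a b hab
  rw [← sub_pos, xi_sub_xi_eq_integral, intervalIntegral.integral_pos_iff_support_of_nonneg_ae
    (ae_of_all _ xiDeriv_nonneg) (continuous_xiDeriv.intervalIntegrable a b)]
  refine ⟨hab, ?_⟩
  have hzeros : {x : ℝ | Real.sin x = 0}.Countable :=
    (Set.countable_range fun n : ℤ => (n : ℝ) * π).mono fun x hx => Real.sin_eq_zero_iff.1 hx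
  have hsub : Set.Ioc a b \ {x | Real.sin x = 0} ⊆ Function.support xiDeriv ∩ Set.Ioc a b :=
    fun x hx => ⟨Function.mem_support.2 (by
      have : Real.sin x ≠ 0 := hx.2
      unfold xiDeriv; positivity), hx.1⟩
  calc (0 : ENNReal) < volume (Set.Ioc a b \ {x | Real.sin x = 0}) := by
        rw [measure_sdiff_null (hzeros.measure_zero _), Real.volume_Ioc]; simpa using hab
    _ ≤ _ := measure_mono hsub

lemma hasDerivAt_xiDeriv (t : ℝ) : HasDerivAt xiDeriv
    (Real.cos t * Real.sin t * (2 + Real.sin t ^ 2) / √(1 + Real.sin t ^ 2) ^ 3) t := by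
  have hsin2 := (Real.hasDerivAt_sin t).fun_pow 2
  have hsqrt := (hsin2.const_add 1).sqrt (by positivity)
  refine (hsin2.div hsqrt (sqrt_one_add_sin_sq_pos t).ne').congr_deriv ?_
  have hr := sq_sqrt_one_add_sin_sq t
  have hr0 := (sqrt_one_add_sin_sq_pos t).ne'
  field_simp
  linear_combination (4 * Real.sin t * Real.cos t) * hr

lemma hasDerivAt_R (t : ℝ) : HasDerivAt R (velocity t) t :=
  (Real.hasDerivAt_sin t).ofReal_comp.add ((hasDerivAt_xi_s17 t).ofReal_comp.const_mul I)

lemma deriv_R_s17 : deriv R = velocity := funext fun t => (hasDerivAt_R t).deriv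

lemma hasDerivAt_velocity (t : ℝ) : HasDerivAt velocity (acceleration t) t :=
  (Real.hasDerivAt_cos t).ofReal_comp.add ((hasDerivAt_xiDeriv t).ofReal_comp.const_mul I)

lemma velocity_ne_zero (t : ℝ) : velocity t ≠ 0 := by
  intro h
  have hcos : Real.cos t = 0 := by simpa using congrArg re h
  have hsin : Real.sin t = 0 := by
    have : xiDeriv t = 0 := by simpa using congrArg im h
    simpa [xiDeriv, (sqrt_one_add_sin_sq_pos t).ne'] using this
  simpa [hcos, hsin] using Real.sin_sq_add_cos_sq t

lemma normSq_velocity (t : ℝ) : normSq (velocity t) = 1 / (1 + Real.sin t ^ 2) := by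
  have hr := sq_sqrt_one_add_sin_sq t
  have hr0 := (sqrt_one_add_sin_sq_pos t).ne'
  rw [normSq_apply, velocity_re, velocity_im, xiDeriv]
  field_simp
  rw [hr]
  linear_combination (1 + Real.sin t ^ 2) ^ 2 * Real.sin_sq_add_cos_sq t

-- The signed curvature `2 sin t` of `R` times its speed `1 / √(1 + sin² t)`.
lemma im_acceleration_div_velocity (t : ℝ) :
    (acceleration t / velocity t).im = 2 * Real.sin t / √(1 + Real.sin t ^ 2) := by
  have hr := sq_sqrt_one_add_sin_sq t
  have hr0 := (sqrt_one_add_sin_sq_pos t).ne'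
  have hcos : Real.cos t ^ 2 = 1 - Real.sin t ^ 2 := by linarith [Real.sin_sq_add_cos_sq t]
  rw [div_im, normSq_velocity]
  simp only [acceleration, velocity_re, velocity_im, add_re, add_im, mul_re, mul_im, I_re, I_im,
    ofReal_re, ofReal_im, xiDeriv]
  field_simp
  linear_combination (1 + Real.sin t ^ 2) * (2 + Real.sin t ^ 2) * Real.sin t *
    √(1 + Real.sin t ^ 2) * hcos + ((1 + Real.sin t ^ 2) * Real.sin t ^ 3 - 2 * Real.sin t) *
    √(1 + Real.sin t ^ 2) * hr

lemma hasDerivAt_chord (t₁ t₂ : ℝ) : HasDerivAt (fun s => R t₂ - R s) (-velocity t₁) t₁ :=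
  (hasDerivAt_R t₁).const_sub (R t₂)

section Chord

variable {t₁ t₂ : ℝ}

lemma chord_im_pos (h : t₁ < t₂) : 0 < (R t₂ - R t₁).im := by
  simpa using xi_strictMono h

lemma chord_ne_zero (h : t₁ < t₂) : R t₂ - R t₁ ≠ 0 :=
  ne_of_apply_ne im (chord_im_pos h).ne'

lemma velocity_div_chord_mem_slitPlane (h : t₁ < t₂) (t : ℝ) :
    velocity t / (R t₂ - R t₁) ∈ slitPlane :=
  div_mem_slitPlane_of_im_nonneg (velocity_ne_zero t) (by simpa using xiDeriv_nonneg t)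
    (chord_im_pos h)

lemma hasDerivAt_alphaAng (h : t₁ < t₂) :
    HasDerivAt (fun s => alphaAng s t₂)
      ((acceleration t₁ / velocity t₁).im + (velocity t₁ / (R t₂ - R t₁)).im) t₁ := by
  have hquot := (hasDerivAt_velocity t₁).fun_div (hasDerivAt_chord t₁ t₂) (chord_ne_zero h)
  simp only [alphaAng, deriv_R_s17]
  refine (hquot.arg (velocity_div_chord_mem_slitPlane h t₁)).congr_deriv ?_
  rw [← add_im]
  congr 1
  field_simp [velocity_ne_zero t₁, chord_ne_zero h]
  ring

lemma hasDerivAt_betaAng (h : t₁ < t₂) :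
    HasDerivAt (fun s => betaAng s t₂) (velocity t₁ / (R t₂ - R t₁)).im t₁ := by
  have hquot :=
    (hasDerivAt_const t₁ (velocity t₂)).fun_div (hasDerivAt_chord t₁ t₂) (chord_ne_zero h)
  simp only [betaAng, deriv_R_s17]
  refine (hquot.arg (velocity_div_chord_mem_slitPlane h t₂)).congr_deriv ?_
  congr 1
  field_simp [velocity_ne_zero t₂, chord_ne_zero h]
  ring

end Chord

theorem energy_gradient_identity_general (t₁ t₂ : ℝ) (h : t₁ < t₂) :
    -‖R t₂ - R t₁‖ * Real.sin t₁ * deriv (fun s => alphaAng s t₂) t₁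
      + ‖R t₂ - R t₁‖ * Real.sin t₂ * deriv (fun s => betaAng s t₂) t₁
      = deriv (fun s => ‖R t₂ - R s‖ * (xi t₂ - xi s)) t₁ := by
  have hlength := (hasDerivAt_chord t₁ t₂).norm_complex (chord_ne_zero h)
  rw [(hasDerivAt_alphaAng h).deriv, (hasDerivAt_betaAng h).deriv,
    (hlength.fun_mul ((hasDerivAt_xi_s17 t₁).const_sub (xi t₂))).deriv]
  have hcurv : Real.sin t₁ * (acceleration t₁ / velocity t₁).im = 2 * xiDeriv t₁ := by
    rw [im_acceleration_div_velocity, xiDeriv]; ring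
  have hproj : (Real.sin t₂ - Real.sin t₁) * (velocity t₁ / (R t₂ - R t₁)).im
      + (xi t₂ - xi t₁) * (velocity t₁ / (R t₂ - R t₁)).re = xiDeriv t₁ := by
    have := congrArg im (div_mul_cancel₀ (velocity t₁) (chord_ne_zero h))
    rw [mul_im, velocity_im] at this
    simp only [sub_re, sub_im, R_re, R_im] at this
    linarith
  rw [neg_div, neg_re]
  linear_combination ‖R t₂ - R t₁‖ * (hproj - hcurv)

theorem energy_gradient_identity (t₁ t₂ : ℝ) (h : t₁ < t₂)
    (hs : Real.sin t₁ ≠ 0 ∨ Real.sin t₂ ≠ 0) :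
    -‖R t₂ - R t₁‖ * Real.sin t₁ * deriv (fun s => alphaAng s t₂) t₁
      + ‖R t₂ - R t₁‖ * Real.sin t₂ * deriv (fun s => betaAng s t₂) t₁
      = deriv (fun s => ‖R t₂ - R s‖ * (xi t₂ - xi s)) t₁ :=
  energy_gradient_identity_general t₁ t₂ h
end

section
/- Suppose X, Y are Hausdorff topological spaces with Y path-connected, and f: X → Y is a surjective, proper, local homeomorphism. Then f is a covering map. -/
/-!
A local homeomorphism has discrete fibres, so properness makes them finite. Around `y`, pairwise
disjoint open sheets through the points of `f ⁻¹' {y}` show that the fibre cardinality can only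
grow near `y`; on a compact set `K` it can only drop, because the part of `f ⁻¹' K` outside the
sheets is compact and its image is a closed set missing `y`. Along a path (a compact set) the
cardinality is therefore locally constant, hence constant on the path-connected base. Equal
cardinality then forces every fibre near `y` to lie inside the sheets, which is even covering.
-/

open Set Topology Filter

theorem ncard_preimage_singleton_inter_biUnion {α β : Type*} {f : α → β} {s : Set α}
    {U : α → Set α} (hinj : ∀ x ∈ s, InjOn f (U x)) (hdisj : s.PairwiseDisjoint U) {y : β}
    (hy : ∀ x ∈ s, y ∈ f '' U x) :
    (f ⁻¹' {y} ∩ ⋃ x ∈ s, U x).ncard = s.ncard := by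
  choose! φ hφU hφf using hy
  have hφ_image : φ '' s = f ⁻¹' {y} ∩ ⋃ x ∈ s, U x := by
    refine Subset.antisymm ?_ ?_
    · rintro _ ⟨x, hx, rfl⟩
      exact ⟨hφf x hx, mem_biUnion hx (hφU x hx)⟩
    · rintro z ⟨hz, hzU⟩
      obtain ⟨x, hx, hzx⟩ := mem_iUnion₂.mp hzU
      exact ⟨x, hx, hinj x hx (hφU x hx) hzx ((hφf x hx).trans hz.symm)⟩
  have hφ_inj : InjOn φ s := fun x hx x' hx' hxx' => hdisj.elim hx hx'
    (not_disjoint_iff.mpr ⟨φ x, hφU x hx, hxx' ▸ hφU x' hx'⟩)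
  rw [← hφ_image, hφ_inj.ncard_image]

namespace IsLocalHomeomorph

variable {X Y : Type*} [TopologicalSpace X] [TopologicalSpace Y] {f : X → Y}

theorem finite_preimage_singleton (hloc : IsLocalHomeomorph f) {y : Y}
    (hy : IsCompact (f ⁻¹' {y})) : (f ⁻¹' {y}).Finite :=
  hy.finite <| .of_openPartialHomeomorph f subset_rfl fun x _ =>
    (hloc x).imp fun _ he => ⟨he.1, he.2.symm⟩

theorem exists_pairwiseDisjoint_injOn [T2Space X] (hloc : IsLocalHomeomorph f) {s : Set X}
    (hs : s.Finite) :
    ∃ U : X → Set X, (∀ x, IsOpen (U x)) ∧ (∀ x ∈ s, x ∈ U x) ∧ (∀ x, InjOn f (U x)) ∧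
      s.PairwiseDisjoint U := by
  choose e hxe hfe using hloc
  obtain ⟨W, hW, hWdisj⟩ := hs.t2_separation
  refine ⟨fun x => (e x).source ∩ W x, fun x => (e x).open_source.inter (hW x).2,
    fun x _ => ⟨hxe x, (hW x).1⟩, fun x => ?_,
    hWdisj.mono fun x => inter_subset_right⟩
  rw [hfe x]
  exact (e x).injOn.mono inter_subset_left

theorem isOpen_iff_isOpen_preimage_inter (hloc : IsLocalHomeomorph f) {U : Set X}
    (hU : IsOpen U) {W : Set Y} (hW : W ⊆ f '' U) : IsOpen W ↔ IsOpen (f ⁻¹' W ∩ U) := by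
  refine ⟨fun h => (h.preimage hloc.continuous).inter hU, fun h => ?_⟩
  rw [← inter_eq_left.mpr hW, ← image_preimage_inter]
  exact hloc.isOpenMap _ h

theorem ncard_preimage_singleton_eventually_eq [T2Space X] [T2Space Y]
    (hloc : IsLocalHomeomorph f) (hproper : ∀ K : Set Y, IsCompact K → IsCompact (f ⁻¹' K))
    {K : Set Y} (hK : IsCompact K) (y : Y) :
    ∀ᶠ y' in 𝓝[K] y, (f ⁻¹' {y'}).ncard = (f ⁻¹' {y}).ncard := by
  have hfin := hloc.finite_preimage_singleton (hproper {y} isCompact_singleton)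
  obtain ⟨U, hUo, hmemU, hinj, hdisj⟩ := hloc.exists_pairwiseDisjoint_injOn hfin
  set T := ⋃ x ∈ f ⁻¹' {y}, U x
  have hT : IsOpen T := isOpen_biUnion fun x _ => hUo x
  let V := (⋂ x ∈ f ⁻¹' {y}, f '' U x) \ f '' (f ⁻¹' K \ T)
  have hV : IsOpen V := (hfin.isOpen_biInter fun x _ => hloc.isOpenMap _ (hUo x)).sdiff
    (((hproper K hK).diff hT).image hloc.continuous).isClosed
  have hyV : y ∈ V := by
    refine ⟨mem_iInter₂.mpr fun x hx => ⟨x, hmemU x hx, hx⟩, ?_⟩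
    rintro ⟨x, ⟨-, hxT⟩, hx⟩
    exact hxT (mem_biUnion hx (hmemU x hx))
  refine mem_nhdsWithin.mpr ⟨V, hV, hyV, ?_⟩
  rintro y' ⟨⟨hy'U, hy'C⟩, hy'K⟩
  have hfiber_sub : f ⁻¹' {y'} ⊆ T := fun z hz => by
    by_contra hzT
    exact hy'C ⟨z, ⟨by rwa [mem_preimage, mem_singleton_iff.mp hz], hzT⟩, hz⟩
  show (f ⁻¹' {y'}).ncard = (f ⁻¹' {y}).ncard
  rw [← inter_eq_left.mpr hfiber_sub]
  exact ncard_preimage_singleton_inter_biUnion (fun x _ => hinj x) hdisj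
    fun x hx => mem_iInter₂.mp hy'U x hx

theorem ncard_preimage_singleton_eq [T2Space X] [T2Space Y] [PathConnectedSpace Y]
    (hloc : IsLocalHomeomorph f) (hproper : ∀ K : Set Y, IsCompact K → IsCompact (f ⁻¹' K))
    (y y' : Y) : (f ⁻¹' {y}).ncard = (f ⁻¹' {y'}).ncard := by
  obtain ⟨γ⟩ := PathConnectedSpace.joined y y'
  have hγ : IsLocallyConstant fun t => (f ⁻¹' {γ t}).ncard := by
    refine (IsLocallyConstant.iff_eventually_eq _).mpr fun t => ?_
    have hγt : Tendsto γ (𝓝 t) (𝓝[range γ] (γ t)) :=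
      tendsto_nhdsWithin_range.mpr γ.continuous.continuousAt
    exact hγt.eventually
      (hloc.ncard_preimage_singleton_eventually_eq hproper (isCompact_range γ.continuous) _)
  simpa using hγ.apply_eq_of_preconnectedSpace 0 1

theorem isEvenlyCovered_of_ncard_preimage_singleton_eq [T2Space X] (hloc : IsLocalHomeomorph f)
    (hfin : ∀ y, (f ⁻¹' {y}).Finite) {y : Y}
    (hcard : ∀ y', (f ⁻¹' {y'}).ncard = (f ⁻¹' {y}).ncard) :
    IsEvenlyCovered f y (f ⁻¹' {y}) := by
  obtain ⟨U, hUo, hmemU, hinj, hdisj⟩ := hloc.exists_pairwiseDisjoint_injOn (hfin y)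
  set V := ⋂ x ∈ f ⁻¹' {y}, f '' U x
  have hV : IsOpen V := (hfin y).isOpen_biInter fun x _ => hloc.isOpenMap _ (hUo x)
  have hyV : y ∈ V := mem_iInter₂.mpr fun x hx => ⟨x, hmemU x hx, hx⟩
  have hVU : ∀ x ∈ f ⁻¹' {y}, V ⊆ f '' U x := fun x hx => biInter_subset_of_mem hx
  -- every fibre over `V` meets the sheets in as many points as it has, so lies inside them
  have hexhaust : f ⁻¹' V ⊆ ⋃ x ∈ f ⁻¹' {y}, U x := fun z hz => by
    have hcard_inter := ncard_preimage_singleton_inter_biUnion (fun x _ => hinj x) hdisj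
      fun x hx => hVU x hx hz
    have hfiber := eq_of_subset_of_ncard_le inter_subset_left
      (hcard_inter.trans (hcard (f z)).symm).ge (hfin (f z))
    exact (hfiber.ge (mem_singleton (f z))).2
  cases isEmpty_or_nonempty (f ⁻¹' {y}) with
  | inl hempty =>
    have hfiber : f ⁻¹' {y} = ∅ := isEmpty_coe_sort.mp hempty
    exact .of_preimage_eq_empty _ (hV.mem_nhds hyV) (by simpa [hfiber] using hexhaust)
  | inr hne =>
    have : Finite (f ⁻¹' {y}) := hfin y
    have : Nonempty (Y → X) := ⟨fun _ => hne.some.1⟩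
    refine .of_trivialization (t := hV.trivializationDiscrete (fun x : f ⁻¹' {y} => U x) V
      (fun x _ hW => hloc.isOpen_iff_isOpen_preimage_inter (hUo x) (hW.trans (hVU x x.2)))
      (fun x => hinj x) (fun x => hVU x x.2) (hdisj.subtype _ _) ?_) hyV
    rwa [biUnion_eq_iUnion] at hexhaust

end IsLocalHomeomorph

theorem proper_local_homeomorph_is_covering_general
    {X Y : Type*} [TopologicalSpace X] [TopologicalSpace Y]
    [T2Space X] [T2Space Y] [PathConnectedSpace Y]
    (f : X → Y)
    (hproper : ∀ K : Set Y, IsCompact K → IsCompact (f ⁻¹' K))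
    (hloc : IsLocalHomeomorph f) :
    IsCoveringMap f := fun y =>
  hloc.isEvenlyCovered_of_ncard_preimage_singleton_eq
    (fun _ => hloc.finite_preimage_singleton (hproper _ isCompact_singleton))
    fun y' => hloc.ncard_preimage_singleton_eq hproper y' y

theorem proper_local_homeomorph_is_covering
    {X Y : Type*} [TopologicalSpace X] [TopologicalSpace Y]
    [T2Space X] [T2Space Y] [PathConnectedSpace Y]
    (f : X → Y) (hf : Continuous f) (hsurj : Function.Surjective f)
    (hproper : ∀ K : Set Y, IsCompact K → IsCompact (f ⁻¹' K))
    (hloc : IsLocalHomeomorph f) :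
    IsCoveringMap f :=
  proper_local_homeomorph_is_covering_general f hproper hloc
end
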